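/- Let n ≥ 1. The space of finitely presentable n-parameter persistence modules, metrized with the interleaving distance, is not a Baire space: there exists a countable family of dense open subsets whose intersection is empty. -/

import Mathlib

/-- A pointwise finite dimensional persistence module over a poset `P`, with coefficients in
the field `k`: a functor from `P` to finite dimensional `k`-vector spaces. -/
structure PersMod (k : Type) [Field k] (P : Type) [PartialOrder P] : Type 1 where
  carrier : P → Type
  [addCommGroup : ∀ x, AddCommGroup (carrier x)]
  [module : ∀ x, Module k (carrier x)]
  [fd : ∀ x, FiniteDimensional k (carrier x)]
  map : ∀ {x y : P}, x ≤ y → (carrier x →ₗ[k] carrier y)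
  map_id : ∀ x : P, map (le_refl x) = LinearMap.id
  map_comp : ∀ {x y z : P} (h₁ : x ≤ y) (h₂ : y ≤ z),
      map (h₁.trans h₂) = (map h₂).comp (map h₁)

attribute [instance] PersMod.addCommGroup PersMod.module PersMod.fd

namespace PersMod

section Core

variable {k : Type} [Field k] {P : Type} [PartialOrder P]

/-- A morphism of persistence modules (a natural transformation). -/
structure Hom (M N : PersMod k P) where
  app : ∀ x, M.carrier x →ₗ[k] N.carrier x
  natural : ∀ {x y : P} (h : x ≤ y), (app y).comp (M.map h) = (N.map h).comp (app x)

theorem Hom.ext' {M N : PersMod k P} {f g : Hom M N} (h : ∀ x, f.app x = g.app x) :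
    f = g := by
  cases f; cases g
  have : _ = _ := funext h
  subst this
  rfl

/-- Two persistence modules are isomorphic. -/
def Isom (M N : PersMod k P) : Prop :=
  ∃ (f : Hom M N) (g : Hom N M),
    (∀ x, (g.app x).comp (f.app x) = LinearMap.id) ∧
    (∀ x, (f.app x).comp (g.app x) = LinearMap.id)

/-- The zero persistence module(s). -/
def IsZeroMod (M : PersMod k P) : Prop := ∀ x, Subsingleton (M.carrier x)

/-- The direct sum of two persistence modules. -/
def dsum (M N : PersMod k P) : PersMod k P where
  carrier x := M.carrier x × N.carrier x
  map h := (M.map h).prodMap (N.map h)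
  map_id x := by
    refine LinearMap.ext fun v => ?_
    simp [M.map_id, N.map_id]
  map_comp h₁ h₂ := by
    refine LinearMap.ext fun v => ?_
    simp [M.map_comp h₁ h₂, N.map_comp h₁ h₂]

/-- A persistence module is indecomposable if it is nonzero and in any way of writing it as
a direct sum of two modules, one of the summands is zero. -/
def Indecomposable (M : PersMod k P) : Prop :=
  ¬ IsZeroMod M ∧ ∀ A B : PersMod k P, Isom M (dsum A B) → IsZeroMod A ∨ IsZeroMod B

end Core

section Interleaving

variable {k : Type} [Field k] {n : ℕ}

/-- A point of `ℝⁿ`. -/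
abbrev Pt (n : ℕ) := Fin n → ℝ

/-- The shift of a point of `ℝⁿ` by `ε` in every coordinate. -/
def shiftPt (r : Pt n) (ε : ℝ) : Pt n := fun i => r i + ε

lemma le_shiftPt (r : Pt n) {ε : ℝ} (hε : 0 ≤ ε) : r ≤ shiftPt r ε :=
  fun _ => le_add_of_nonneg_right hε

lemma shiftPt_mono {r s : Pt n} (h : r ≤ s) (ε : ℝ) : shiftPt r ε ≤ shiftPt s ε :=
  fun i => add_le_add (h i) le_rfl

/-- An `ε`-interleaving between two persistence modules over `ℝⁿ`: morphisms
`f : M → N[ε]` and `g : N → M[ε]` whose composites are the `2ε`-shift morphisms. -/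
def Interleaved (M N : PersMod k (Pt n)) (ε : ℝ) : Prop :=
  0 ≤ ε ∧
  ∃ (f : ∀ x : Pt n, M.carrier x →ₗ[k] N.carrier (shiftPt x ε))
    (g : ∀ x : Pt n, N.carrier x →ₗ[k] M.carrier (shiftPt x ε)),
    (∀ (x y : Pt n) (h : x ≤ y),
        (f y).comp (M.map h) = (N.map (shiftPt_mono h ε)).comp (f x)) ∧
    (∀ (x y : Pt n) (h : x ≤ y),
        (g y).comp (N.map h) = (M.map (shiftPt_mono h ε)).comp (g x)) ∧
    (∀ (x : Pt n) (h : x ≤ shiftPt (shiftPt x ε) ε),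
        (g (shiftPt x ε)).comp (f x) = M.map h) ∧
    (∀ (x : Pt n) (h : x ≤ shiftPt (shiftPt x ε) ε),
        (f (shiftPt x ε)).comp (g x) = N.map h)

/-- The interleaving distance, with value `∞` if no interleaving exists. -/
noncomputable def dI (M N : PersMod k (Pt n)) : ENNReal :=
  sInf (ENNReal.ofReal '' {ε : ℝ | Interleaved M N ε})

/-- `M` is `ε`-trivial if all structure maps `M(r) → M(r+ε)` vanish. -/
def EpsTrivial (M : PersMod k (Pt n)) (ε : ℝ) : Prop :=
  0 ≤ ε ∧ ∀ (r : Pt n) (h : r ≤ shiftPt r ε), M.map h = 0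

/-- `M` is strictly `ε`-trivial if it is `ε'`-trivial for some `ε' < ε`. -/
def StrictlyEpsTrivial (M : PersMod k (Pt n)) (ε : ℝ) : Prop :=
  ∃ ε' < ε, EpsTrivial M ε'

/-- `M` is `ε`-indecomposable if it is the direct sum of an indecomposable module and a
strictly `ε`-trivial module. -/
def EpsIndecomposable (M : PersMod k (Pt n)) (ε : ℝ) : Prop :=
  ∃ A B : PersMod k (Pt n), Indecomposable A ∧ StrictlyEpsTrivial B ε ∧ Isom M (dsum A B)

end Interleaving

section FinitelyPresentable

variable {k : Type} [Field k] {P : Type} [PartialOrder P]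

/-- The submodule of `k` underlying the value of the free module `P_q` at `s`:
everything if `q ≤ s`, zero otherwise. -/
noncomputable def pSub (k : Type) [Field k] (q s : P) : Submodule k k :=
  @ite _ (q ≤ s) (Classical.propDecidable _) ⊤ ⊥

lemma pSub_mono (q : P) {s t : P} (h : s ≤ t) : pSub k q s ≤ pSub k q t := by
  unfold pSub
  split_ifs with h1 h2
  · exact le_rfl
  · exact absurd (h1.trans h) h2
  · exact bot_le
  · exact bot_le

/-- The free persistence module `P_q` generated at `q`: it has value `k` at `s ≥ q` and `0`
elsewhere, with identity structure maps wherever possible. -/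
noncomputable def Pmod (k : Type) [Field k] (q : P) : PersMod k P where
  carrier s := ↥(pSub k q s)
  map h := Submodule.inclusion (pSub_mono q h)
  map_id s := rfl
  map_comp h₁ h₂ := rfl

/-- Finite direct sums of persistence modules. -/
def fdsum {ι : Type} [Fintype ι] (Ms : ι → PersMod k P) : PersMod k P where
  carrier x := ∀ i, (Ms i).carrier x
  map h := LinearMap.pi fun i => ((Ms i).map h).comp (LinearMap.proj i)
  map_id x := by
    refine LinearMap.ext fun v => funext fun i => ?_
    simp [(Ms i).map_id]
  map_comp h₁ h₂ := by
    refine LinearMap.ext fun v => funext fun i => ?_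
    simp [(Ms i).map_comp h₁ h₂]

/-- The cokernel of a morphism of persistence modules. -/
noncomputable def cokerMod {M N : PersMod k P} (f : Hom M N) : PersMod k P where
  carrier x := N.carrier x ⧸ LinearMap.range (f.app x)
  map {x y} h := Submodule.mapQ _ _ (N.map h) (by
    rintro v hv
    obtain ⟨w, rfl⟩ := LinearMap.mem_range.mp hv
    simp only [Submodule.mem_comap, LinearMap.mem_range]
    refine ⟨M.map h w, ?_⟩
    have hnat := f.natural h
    calc (f.app y) (M.map h w) = ((f.app y).comp (M.map h)) w := rfl
      _ = ((N.map h).comp (f.app x)) w := by rw [hnat]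
      _ = N.map h (f.app x w) := rfl)
  map_id x := by
    refine LinearMap.ext fun v => ?_
    obtain ⟨w, rfl⟩ := Submodule.Quotient.mk_surjective _ v
    rw [Submodule.mapQ_apply, N.map_id]
    rfl
  map_comp h₁ h₂ := by
    refine LinearMap.ext fun v => ?_
    obtain ⟨w, rfl⟩ := Submodule.Quotient.mk_surjective _ v
    simp [Submodule.mapQ_apply, N.map_comp h₁ h₂]

/-- A persistence module is finitely presentable if it is isomorphic to the cokernel of a
morphism between finite direct sums of free modules `P_p`. -/
def FinitelyPresentable (M : PersMod k P) : Prop :=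
  ∃ (ι κ : Type) (_ : Fintype ι) (_ : Fintype κ) (gp : ι → P) (rp : κ → P)
    (f : Hom (fdsum fun j => Pmod k (rp j)) (fdsum fun i => Pmod k (gp i))),
    Isom M (cokerMod f)

end FinitelyPresentable

end PersMod

open PersMod

/-!
Let `rankSet k n i` be the set of modules having a structure map `M(r) → M(r + c)`, `c > 0`, of
rank at least `i`. An `ε`-interleaving with `2ε < c` factors such a map through a structure map
of the other module over the diagonal of length `c - 2ε`, so these sets are open. Adding to `M`
the box module, `i` copies of the interval module on `[0, b)ⁿ`, gives a finitely presentable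
module of rank `i` near the origin which is `b`-interleaved with `M`, since the box module is
`b`-trivial (this needs `n ≥ 1`); so they are dense. A module presented with `m` generators has
dimension at most `m` everywhere, so it misses `rankSet k n (m + 1)`.
-/

lemma LinearMap.finrank_range_comp_comp_le {k V₁ V₂ V₃ V₄ : Type*} [Field k]
    [AddCommGroup V₁] [Module k V₁] [AddCommGroup V₂] [Module k V₂]
    [AddCommGroup V₃] [Module k V₃] [FiniteDimensional k V₃] [AddCommGroup V₄] [Module k V₄]
    (A : V₃ →ₗ[k] V₄) (m : V₂ →ₗ[k] V₃) (B : V₁ →ₗ[k] V₂) :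
    Module.finrank k (range (A ∘ₗ m ∘ₗ B)) ≤ Module.finrank k (range m) := by
  rw [range_comp]
  exact (Submodule.finrank_map_le A _).trans
    (Submodule.finrank_mono (range_comp_le_range B m))

namespace PersMod

open Submodule LinearMap Module

section Poset

variable {k : Type} [Field k] {P : Type} [PartialOrder P]

lemma map_map (M : PersMod k P) {x y z : P} (h₁ : x ≤ y) (h₂ : y ≤ z) (v : M.carrier x) :
    M.map h₂ (M.map h₁ v) = M.map (h₁.trans h₂) v := by
  rw [M.map_comp h₁ h₂]; rfl

lemma isom_iff_exists_linearEquiv {M N : PersMod k P} :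
    Isom M N ↔ ∃ e : ∀ x, M.carrier x ≃ₗ[k] N.carrier x,
      ∀ {x y : P} (h : x ≤ y) (v : M.carrier x), e y (M.map h v) = N.map h (e x v) := by
  constructor
  · rintro ⟨f, g, hgf, hfg⟩
    exact ⟨fun x => .ofLinearMap (f.app x) (g.app x) (hfg x) (hgf x),
      fun h v => LinearMap.congr_fun (f.natural h) v⟩
  · rintro ⟨e, he⟩
    refine ⟨⟨fun x => e x, fun h => LinearMap.ext (he h)⟩,
      ⟨fun x => (e x).symm, fun h => LinearMap.ext fun w => (e _).injective ?_⟩,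
      fun x => LinearMap.ext (e x).symm_apply_apply,
      fun x => LinearMap.ext (e x).apply_symm_apply⟩
    simp [he]

lemma Isom.refl (M : PersMod k P) : Isom M M :=
  isom_iff_exists_linearEquiv.2 ⟨fun _ => LinearEquiv.refl k _, fun _ _ => rfl⟩

lemma Isom.symm {M N : PersMod k P} (hMN : Isom M N) : Isom N M :=
  let ⟨f, g, hgf, hfg⟩ := hMN
  ⟨g, f, hfg, hgf⟩

lemma Isom.trans {L M N : PersMod k P} (hLM : Isom L M) (hMN : Isom M N) : Isom L N := by
  obtain ⟨e, he⟩ := isom_iff_exists_linearEquiv.1 hLM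
  obtain ⟨e', he'⟩ := isom_iff_exists_linearEquiv.1 hMN
  exact isom_iff_exists_linearEquiv.2
    ⟨fun x => (e x).trans (e' x), fun h v => by simp [he, he']⟩

lemma Isom.dsum {M M' N N' : PersMod k P} (hM : Isom M M') (hN : Isom N N') :
    Isom (dsum M N) (dsum M' N') := by
  obtain ⟨e, he⟩ := isom_iff_exists_linearEquiv.1 hM
  obtain ⟨e', he'⟩ := isom_iff_exists_linearEquiv.1 hN
  exact isom_iff_exists_linearEquiv.2
    ⟨fun x => (e x).prodCongr (e' x), fun h v => Prod.ext (he h v.1) (he' h v.2)⟩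

lemma pSub_eq_top {q s : P} (h : q ≤ s) : pSub k q s = ⊤ := if_pos h

lemma pSub_eq_bot {q s : P} (h : ¬ q ≤ s) : pSub k q s = ⊥ := if_neg h

lemma pSub_anti {q q' : P} (h : q' ≤ q) (s : P) : pSub k q s ≤ pSub k q' s := by
  by_cases hq : q ≤ s
  · rw [pSub_eq_top (h.trans hq)]; exact le_top
  · rw [pSub_eq_bot hq]; exact bot_le

noncomputable def mapRank (M : PersMod k P) {x y : P} (h : x ≤ y) : ℕ :=
  finrank k (range (M.map h))

lemma mapRank_le_finrank (M : PersMod k P) {x y : P} (h : x ≤ y) :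
    M.mapRank h ≤ finrank k (M.carrier y) :=
  Submodule.finrank_le _

lemma Isom.mapRank_le {M N : PersMod k P} (hMN : Isom M N) {x y : P} (h : x ≤ y) :
    M.mapRank h ≤ N.mapRank h := by
  obtain ⟨e, he⟩ := isom_iff_exists_linearEquiv.1 hMN
  have hfac : M.map h = (e y).symm.toLinearMap ∘ₗ N.map h ∘ₗ (e x).toLinearMap :=
    LinearMap.ext fun v => by simp [← he]
  rw [mapRank, hfac]
  exact finrank_range_comp_comp_le _ _ _

lemma mapRank_le_mapRank_dsum_right (A B : PersMod k P) {x y : P} (h : x ≤ y) :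
    B.mapRank h ≤ (dsum A B).mapRank h := by
  have hfac : B.map h = LinearMap.snd k _ _ ∘ₗ (dsum A B).map h ∘ₗ LinearMap.inr k _ _ :=
    LinearMap.ext fun _ => rfl
  rw [mapRank, hfac]
  exact finrank_range_comp_comp_le _ _ _

end Poset

section BlockDiag

variable {k : Type} [Field k] {P : Type} [PartialOrder P]

def fdsumSumEquiv {ι ι' : Type} [Fintype ι] [Fintype ι'] (Ns : ι ⊕ ι' → PersMod k P) (x : P) :
    (fdsum Ns).carrier x ≃ₗ[k]
      (fdsum (Ns ∘ Sum.inl)).carrier x × (fdsum (Ns ∘ Sum.inr)).carrier x :=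
  LinearEquiv.sumPiEquivProdPi k ι ι' fun a => (Ns a).carrier x

variable {κ κ' ι ι' : Type} [Fintype κ] [Fintype κ'] [Fintype ι] [Fintype ι']
  {Ms : κ ⊕ κ' → PersMod k P} {Ns : ι ⊕ ι' → PersMod k P}

def Hom.blockDiag (f : Hom (fdsum (Ms ∘ Sum.inl)) (fdsum (Ns ∘ Sum.inl)))
    (f' : Hom (fdsum (Ms ∘ Sum.inr)) (fdsum (Ns ∘ Sum.inr))) : Hom (fdsum Ms) (fdsum Ns) where
  app x := (fdsumSumEquiv Ns x).symm.toLinearMap ∘ₗ (f.app x).prodMap (f'.app x) ∘ₗ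
    (fdsumSumEquiv Ms x).toLinearMap
  natural h := by
    refine LinearMap.ext fun v => funext fun a => ?_
    rcases a with a | a
    · exact congrFun (LinearMap.congr_fun (f.natural h) _) a
    · exact congrFun (LinearMap.congr_fun (f'.natural h) _) a

variable (f : Hom (fdsum (Ms ∘ Sum.inl)) (fdsum (Ns ∘ Sum.inl)))
  (f' : Hom (fdsum (Ms ∘ Sum.inr)) (fdsum (Ns ∘ Sum.inr)))

lemma range_blockDiag_app (x : P) :
    range ((f.blockDiag f').app x) =
      ker ((mkQ (range (f.app x))).prodMap (mkQ (range (f'.app x))) ∘ₗ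
        (fdsumSumEquiv Ns x).toLinearMap) := by
  ext w
  rw [LinearMap.mem_ker, LinearMap.mem_range]
  simp only [coe_comp, LinearEquiv.coe_coe, Function.comp_apply, prodMap_apply, mkQ_apply,
    Prod.mk_eq_zero, Quotient.mk_eq_zero, mem_range]
  constructor
  · rintro ⟨u, rfl⟩
    exact ⟨⟨fun j => u (.inl j), rfl⟩, ⟨fun j => u (.inr j), rfl⟩⟩
  · rintro ⟨⟨u, hu⟩, ⟨u', hu'⟩⟩
    refine ⟨Sum.rec u u', funext fun a => ?_⟩
    rcases a with a | a
    · exact congrFun hu a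
    · exact congrFun hu' a

lemma isom_cokerMod_blockDiag :
    Isom (cokerMod (f.blockDiag f')) (dsum (cokerMod f) (cokerMod f')) := by
  refine isom_iff_exists_linearEquiv.2 ⟨fun x =>
    (quotEquivOfEq _ _ (range_blockDiag_app f f' x)).trans
      (quotKerEquivOfSurjective _ ?_), fun h v => ?_⟩
  · exact ((mkQ_surjective _).prodMap (mkQ_surjective _)).comp (fdsumSumEquiv Ns x).surjective
  · obtain ⟨w, rfl⟩ := Submodule.Quotient.mk_surjective _ v
    rfl

end BlockDiag

section FinitelyPresentable

variable {k : Type} [Field k] {P : Type} [PartialOrder P]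

lemma finitelyPresentable_cokerMod {ι κ : Type} [Fintype ι] [Fintype κ] {gp : ι → P} {rp : κ → P}
    (f : Hom (fdsum fun j => Pmod k (rp j)) (fdsum fun a => Pmod k (gp a))) :
    (cokerMod f).FinitelyPresentable :=
  ⟨ι, κ, inferInstance, inferInstance, gp, rp, f, Isom.refl _⟩

lemma FinitelyPresentable.dsum {M N : PersMod k P} (hM : M.FinitelyPresentable) (hN : N.FinitelyPresentable) :
    (dsum M N).FinitelyPresentable := by
  obtain ⟨ι, κ, _, _, gp, rp, f, hMf⟩ := hM
  obtain ⟨ι', κ', _, _, gp', rp', f', hNf'⟩ := hN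
  exact ⟨ι ⊕ ι', κ ⊕ κ', inferInstance, inferInstance, Sum.elim gp gp', Sum.elim rp rp', _,
    (hMf.dsum hNf').trans (isom_cokerMod_blockDiag (Ms := fun j => Pmod k (Sum.elim rp rp' j))
      (Ns := fun a => Pmod k (Sum.elim gp gp' a)) f f').symm⟩

lemma FinitelyPresentable.exists_finrank_le {M : PersMod k P} (hM : M.FinitelyPresentable) :
    ∃ m, ∀ x, finrank k (M.carrier x) ≤ m := by
  obtain ⟨ι, κ, _, _, gp, rp, f, hMf⟩ := hM
  obtain ⟨e, -⟩ := isom_iff_exists_linearEquiv.1 hMf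
  refine ⟨Fintype.card ι, fun x => ?_⟩
  calc finrank k (M.carrier x) = finrank k ((cokerMod f).carrier x) := (e x).finrank_eq
    _ ≤ finrank k ((fdsum fun a => Pmod k (gp a)).carrier x) := finrank_quotient_le _
    _ = ∑ a, finrank k (pSub k (gp a) x) := finrank_pi_fintype k
    _ ≤ ∑ _a : ι, 1 := Finset.sum_le_sum fun a _ => (finrank_le _).trans (finrank_self k).le
    _ = Fintype.card ι := by simp

end FinitelyPresentable

section Interleaving

variable {k : Type} [Field k] {n : ℕ}

lemma Interleaved.dI_le {M N : PersMod k (Pt n)} {ε : ℝ} (h : Interleaved M N ε) :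
    dI M N ≤ ENNReal.ofReal ε :=
  sInf_le ⟨ε, h, rfl⟩

lemma exists_interleaved_of_dI_lt {M N : PersMod k (Pt n)} {δ : ℝ}
    (h : dI M N < ENNReal.ofReal δ) : ∃ ε < δ, Interleaved M N ε := by
  obtain ⟨_, ⟨ε, hε, rfl⟩, hlt⟩ := sInf_lt_iff.1 h
  exact ⟨ε, ((ENNReal.ofReal_lt_ofReal_iff').1 hlt).1, hε⟩

lemma interleaved_dsum_of_epsTrivial (M : PersMod k (Pt n)) {B : PersMod k (Pt n)} {ε : ℝ}
    (hB : EpsTrivial B ε) : Interleaved M (dsum M B) ε := by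
  obtain ⟨hε, hB⟩ := hB
  refine ⟨hε, fun x => LinearMap.inl k _ _ ∘ₗ M.map (le_shiftPt x hε),
    fun x => M.map (le_shiftPt x hε) ∘ₗ LinearMap.fst k _ _, ?_, ?_, ?_, ?_⟩
  · intro x y h
    exact LinearMap.ext fun v =>
      Prod.ext ((map_map _ _ _ v).trans (map_map _ _ _ v).symm) (map_zero (B.map _)).symm
  · intro x y h
    exact LinearMap.ext fun v => (map_map _ _ _ v.1).trans (map_map _ _ _ v.1).symm
  · intro x h
    exact LinearMap.ext fun v => map_map _ _ _ v
  · intro x h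
    refine LinearMap.ext fun v => Prod.ext (map_map _ _ _ v.1) ?_
    show 0 = B.map h v.2
    rw [B.map_comp (le_shiftPt x hε) (le_shiftPt (shiftPt x ε) hε), hB, LinearMap.zero_comp]
    rfl

lemma Interleaved.mapRank_le {M N : PersMod k (Pt n)} {ε : ℝ} (hMN : Interleaved M N ε)
    {r s y : Pt n} (h : r ≤ s) (hry : shiftPt r ε ≤ y) (hys : shiftPt y ε ≤ s) :
    M.mapRank h ≤ N.mapRank hry := by
  obtain ⟨hε, f, g, -, hg, hgf, -⟩ := hMN
  have hfac : M.map h = (M.map hys ∘ₗ g y) ∘ₗ N.map hry ∘ₗ f r := by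
    refine LinearMap.ext fun v => ?_
    have hg' := LinearMap.congr_fun (hg _ _ hry) (f r v)
    have hgf' := LinearMap.congr_fun (hgf r ((le_shiftPt r hε).trans (le_shiftPt _ hε))) v
    simp only [LinearMap.comp_apply] at hg' hgf' ⊢
    rw [hg', hgf', map_map, map_map]
  rw [mapRank, hfac]
  exact finrank_range_comp_comp_le _ _ _

end Interleaving

section Box

variable {k : Type} [Field k] {n : ℕ} (i : ℕ) {b : ℝ} (hb : 0 ≤ b)

/-- Generator `l` sits at `0` and is killed at `b • eⱼ` for every `j`. -/
noncomputable def boxPresApp (x : Pt n) :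
    (∀ p : Fin i × Fin n, pSub k (Pi.single p.2 b : Pt n) x) →ₗ[k] (Fin i → pSub k (0 : Pt n) x) :=
  LinearMap.pi fun l => ∑ j,
    Submodule.inclusion (pSub_anti (Pi.single_nonneg.2 hb) x) ∘ₗ LinearMap.proj (l, j)

lemma boxPresApp_apply_coe (x : Pt n) (u : ∀ p : Fin i × Fin n, pSub k (Pi.single p.2 b : Pt n) x)
    (l : Fin i) :
    Subtype.val (boxPresApp i hb x u l) = ∑ j, Subtype.val (u (l, j)) := by
  simp [boxPresApp]

noncomputable def boxPres :
    Hom (fdsum fun p : Fin i × Fin n => Pmod k (Pi.single p.2 b : Pt n))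
      (fdsum fun _ : Fin i => Pmod k (0 : Pt n)) where
  app := boxPresApp i hb
  natural _ := LinearMap.ext fun u => funext fun l => Subtype.ext <|
    (boxPresApp_apply_coe i hb _ _ l).trans (boxPresApp_apply_coe i hb _ u l).symm

lemma boxPresApp_surjective [NeZero n] {y : Pt n} (hy : ∀ j, b ≤ y j) :
    Function.Surjective (boxPresApp (k := k) i hb y) := by
  have htop : ∀ j, pSub k (Pi.single j b : Pt n) y = ⊤ := fun j =>
    pSub_eq_top fun l => by
      rcases eq_or_ne l j with rfl | hl
      · simpa using hy l
      · simpa [hl] using hb.trans (hy l)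
  intro w
  refine ⟨fun p => if p.2 = 0 then ⟨w p.1, by rw [htop]; exact mem_top⟩ else 0,
    funext fun l => Subtype.ext ?_⟩
  simp [boxPresApp_apply_coe, apply_ite Subtype.val]

noncomputable abbrev box : PersMod k (Pt n) := cokerMod (boxPres (k := k) i hb)

lemma box_epsTrivial [NeZero n] : EpsTrivial (box (k := k) (n := n) i hb) b := by
  refine ⟨hb, fun r h => LinearMap.ext fun v => ?_⟩
  obtain ⟨w, rfl⟩ := Submodule.Quotient.mk_surjective _ v
  refine (Quotient.mk_eq_zero _).2 ?_
  by_cases hr : 0 ≤ r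
  · exact boxPresApp_surjective i hb (fun j => le_add_of_nonneg_left (hr j)) _
  · have hw : w = 0 := funext fun l =>
      Subtype.ext ((Submodule.eq_bot_iff _).1 (pSub_eq_bot hr) _ (w l).2)
    rw [hw, map_zero]
    exact zero_mem _

lemma le_mapRank_box {r s : Pt n} (hr : 0 ≤ r) (h : r ≤ s) (hs : ∀ j, s j < b) :
    i ≤ (box (k := k) i hb).mapRank h := by
  have hrel : ∀ j, pSub k (Pi.single j b : Pt n) s = ⊥ := fun j =>
    pSub_eq_bot fun hle => (hs j).not_ge (by simpa using hle j)
  let read : (Fin i → pSub k (0 : Pt n) s) →ₗ[k] (Fin i → k) :=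
    LinearMap.pi fun l => (pSub k (0 : Pt n) s).subtype ∘ₗ LinearMap.proj l
  have hrange : range (boxPresApp (k := k) i hb s) ≤ ker read := by
    rintro _ ⟨u, rfl⟩
    refine LinearMap.mem_ker.2 (funext fun l => ?_)
    simp [read, boxPresApp_apply_coe,
      fun j => (Submodule.eq_bot_iff _).1 (hrel j) _ (u (l, j)).2]
  let incl : (Fin i → k) →ₗ[k] (box (k := k) i hb).carrier r :=
    mkQ _ ∘ₗ LinearMap.pi fun l => (LinearMap.proj l).codRestrict (pSub k (0 : Pt n) r)
      fun c => by rw [pSub_eq_top hr]; exact mem_top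
  let proj : (box (k := k) i hb).carrier s →ₗ[k] (Fin i → k) := liftQ _ read hrange
  have hid : proj ∘ₗ (box i hb).map h ∘ₗ incl = LinearMap.id :=
    LinearMap.ext fun _ => funext fun _ => rfl
  calc i = finrank k (range (LinearMap.id (R := k) (M := Fin i → k))) := by
        rw [LinearMap.range_id, finrank_top, Module.finrank_fin_fun]
    _ = finrank k (range (proj ∘ₗ (box i hb).map h ∘ₗ incl)) := by rw [hid]
    _ ≤ (box i hb).mapRank h := finrank_range_comp_comp_le _ _ _

end Box

section RankSet

variable {k : Type} [Field k] {n : ℕ}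

def rankSet (k : Type) [Field k] (n i : ℕ) : Set (PersMod k (Pt n)) :=
  {M | ∃ (r : Pt n) (c : ℝ) (hc : 0 < c), i ≤ M.mapRank (le_shiftPt r hc.le)}

lemma Isom.mem_rankSet {M N : PersMod k (Pt n)} {i : ℕ} (hMN : Isom M N)
    (hM : M ∈ rankSet k n i) : N ∈ rankSet k n i :=
  let ⟨r, c, hc, hi⟩ := hM
  ⟨r, c, hc, hi.trans (hMN.mapRank_le _)⟩

lemma exists_pos_forall_interleaved_mem_rankSet {M : PersMod k (Pt n)} {i : ℕ}
    (hM : M ∈ rankSet k n i) :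
    ∃ δ > 0, ∀ N ε, Interleaved M N ε → ε < δ → N ∈ rankSet k n i := by
  obtain ⟨r, c, hc, hi⟩ := hM
  refine ⟨c / 2, half_pos hc, fun N ε hMN hε => ?_⟩
  have hc' : 0 < c - 2 * ε := by linarith
  refine ⟨shiftPt r ε, c - 2 * ε, hc',
    hi.trans (hMN.mapRank_le (le_shiftPt r hc.le) (le_shiftPt _ hc'.le) fun j => ?_)⟩
  simp only [shiftPt]
  linarith

lemma dsum_box_mem_rankSet (M : PersMod k (Pt n)) (i : ℕ) {b : ℝ} (hb : 0 < b) :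
    dsum M (box i hb.le) ∈ rankSet k n i :=
  ⟨0, b / 2, half_pos hb, (le_mapRank_box i hb.le le_rfl _ fun _ => by
    simpa [shiftPt] using half_lt_self hb).trans (mapRank_le_mapRank_dsum_right _ _ _)⟩

lemma FinitelyPresentable.exists_not_mem_rankSet {M : PersMod k (Pt n)}
    (hM : M.FinitelyPresentable) : ∃ i, M ∉ rankSet k n i := by
  obtain ⟨m, hm⟩ := hM.exists_finrank_le
  refine ⟨m + 1, fun ⟨r, c, hc, hi⟩ => ?_⟩
  have := (M.mapRank_le_finrank (le_shiftPt r hc.le)).trans (hm _)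
  omega

end RankSet

end PersMod

/-- The space of finitely presentable `n`-parameter persistence modules with the
interleaving distance is not a Baire space: there is a countable family of dense open
(isomorphism-invariant) subsets with empty intersection. -/
theorem not_baire (k : Type) [Field k] (n : ℕ) (hn : 1 ≤ n) :
    ∃ U : ℕ → Set (PersMod k (Pt n)),
      (∀ i, ∀ M N : PersMod k (Pt n), Isom M N → M ∈ U i → N ∈ U i) ∧
      (∀ i, ∀ M : PersMod k (Pt n), M.FinitelyPresentable → M ∈ U i →
        ∃ δ > (0 : ℝ), ∀ N : PersMod k (Pt n), N.FinitelyPresentable →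
          dI M N < ENNReal.ofReal δ → N ∈ U i) ∧
      (∀ i, ∀ M : PersMod k (Pt n), M.FinitelyPresentable → ∀ η : ℝ, 0 < η →
        ∃ N : PersMod k (Pt n), N.FinitelyPresentable ∧ N ∈ U i ∧
          dI M N < ENNReal.ofReal η) ∧
      ¬ ∃ M : PersMod k (Pt n), M.FinitelyPresentable ∧ ∀ i, M ∈ U i := by
  have : NeZero n := ⟨by omega⟩
  refine ⟨rankSet k n, fun i M N hMN hM => hMN.mem_rankSet hM, ?_, ?_, ?_⟩
  · intro i M _ hM
    obtain ⟨δ, hδ, hopen⟩ := exists_pos_forall_interleaved_mem_rankSet hM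
    refine ⟨δ, hδ, fun N _ hMN => ?_⟩
    obtain ⟨ε, hε, hI⟩ := exists_interleaved_of_dI_lt hMN
    exact hopen N ε hI hε
  · intro i M hM η hη
    have hb := half_pos hη
    refine ⟨dsum M (box i hb.le), hM.dsum (finitelyPresentable_cokerMod _),
      dsum_box_mem_rankSet M i hb, ?_⟩
    calc dI M _ ≤ ENNReal.ofReal (η / 2) :=
          (interleaved_dsum_of_epsTrivial M (box_epsTrivial i hb.le)).dI_le
      _ < ENNReal.ofReal η := (ENNReal.ofReal_lt_ofReal_iff hη).2 (half_lt_self hη)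
  · rintro ⟨M, hM, hall⟩
    obtain ⟨i, hi⟩ := hM.exists_not_mem_rankSet
    exact hi (hall i)
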